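/- arXiv:2605.18505 — 3 statements merged into one kernel-verified Lean document; each statement's English description precedes it below -/
import Mathlib

section
/- For every dimension d ≥ 1, every λ > 0 and every κ ≥ 1 there exist constants C ≥ 1 and κ' ≥ 1, depending only on d, λ and κ, with the following property: for all u > 0 and all a, b ∈ ℝ^{2d} satisfying κ^{-1}(|𝕋_u^{-1}a| − 1) ≤ |𝕋_u^{-1}b| ≤ κ(|𝕋_u^{-1}a| + 1), one has C^{-1} g_{λ/κ'}(u,a) ≤ g_λ(u,b) ≤ C g_{κ'λ}(u,a). -/
open MeasureTheory
open scoped BigOperators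

/-- The state space `ℝ^d × ℝ^d`. -/
abbrev Vec (d : ℕ) := (Fin d → ℝ) × (Fin d → ℝ)

/-- The anisotropic Gaussian kernel `g_λ(u, z)` on `ℝ^d × ℝ^d`. -/
noncomputable def gk (d : ℕ) (lam u : ℝ) (z : Vec d) : ℝ :=
  (2 * Real.pi * lam) ^ (-(d : ℝ)) * u ^ (-(2 * (d : ℝ))) *
    Real.exp (-((∑ i, z.1 i ^ 2) / (lam * u) + (∑ i, z.2 i ^ 2) / (lam * u ^ 3)))

/-- `|𝕋_u^{-1} z|`, the Euclidean norm of the anisotropically rescaled vector, i.e.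
`(|z₁|²/u + |z₂|²/u³)^{1/2}`. -/
noncomputable def tnorm (d : ℕ) (u : ℝ) (z : Vec d) : ℝ :=
  Real.sqrt ((∑ i, z.1 i ^ 2) / u + (∑ i, z.2 i ^ 2) / u ^ 3)

/-!
Writing `g_μ(u, z) = (2πμ)^{-d} u^{-2d} exp(-|𝕋_u^{-1} z|² / μ)`, changing the variance from `μ`
to `cμ` only costs the factor `c^{-d}` in front, so comparing two kernels reduces to comparing the
exponents. The two-sided hypothesis on `|𝕋_u^{-1} a|` and `|𝕋_u^{-1} b|` gives, after squaring,
`|𝕋_u^{-1} b|² ≤ 2κ² (1 + |𝕋_u^{-1} a|²)` and symmetrically, which is exactly what this comparison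
needs with `κ' = 2κ²`.
-/

open Real

lemma tnorm_nonneg (d : ℕ) (u : ℝ) (z : Vec d) : 0 ≤ tnorm d u z := sqrt_nonneg _

lemma gk_eq_exp_tnorm_sq (d : ℕ) (μ : ℝ) {u : ℝ} (hu : 0 ≤ u) (z : Vec d) :
    gk d μ u z = (2 * π * μ) ^ (-(d : ℝ)) * u ^ (-(2 * (d : ℝ))) *
      exp (-(tnorm d u z ^ 2 / μ)) := by
  rw [gk, tnorm, sq_sqrt (by positivity), add_div, div_div, div_div, mul_comm u, mul_comm (u ^ 3)]

lemma gk_nonneg (d : ℕ) {μ u : ℝ} (hμ : 0 ≤ μ) (hu : 0 ≤ u) (z : Vec d) : 0 ≤ gk d μ u z := by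
  unfold gk
  positivity

lemma gk_le_mul_gk (d : ℕ) {μ c u : ℝ} (K : ℝ) (hμ : 0 < μ) (hc : 0 < c) (hu : 0 ≤ u)
    {x y : Vec d} (h : tnorm d u y ^ 2 ≤ c * (K + tnorm d u x ^ 2)) :
    gk d μ u x ≤ c ^ (d : ℝ) * exp (K / μ) * gk d (c * μ) u y := by
  have hexp : exp (-(tnorm d u x ^ 2 / μ)) ≤ exp (K / μ) * exp (-(tnorm d u y ^ 2 / (c * μ))) := by
    have hy : tnorm d u y ^ 2 / c ≤ K + tnorm d u x ^ 2 := (div_le_iff₀' hc).2 h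
    have : tnorm d u y ^ 2 / (c * μ) ≤ K / μ + tnorm d u x ^ 2 / μ := by
      rw [← div_div, ← add_div]
      gcongr
    rw [← exp_add, exp_le_exp]
    linarith
  have hscale : (2 * π * (c * μ)) ^ (-(d : ℝ)) = (c ^ (d : ℝ))⁻¹ * (2 * π * μ) ^ (-(d : ℝ)) := by
    rw [show 2 * π * (c * μ) = c * (2 * π * μ) by ring, mul_rpow hc.le (by positivity),
      rpow_neg hc.le]
  have hcd : c ^ (d : ℝ) ≠ 0 := (rpow_pos_of_pos hc _).ne'
  rw [gk_eq_exp_tnorm_sq d μ hu, gk_eq_exp_tnorm_sq d (c * μ) hu, hscale]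
  calc (2 * π * μ) ^ (-(d : ℝ)) * u ^ (-(2 * (d : ℝ))) * exp (-(tnorm d u x ^ 2 / μ))
      ≤ (2 * π * μ) ^ (-(d : ℝ)) * u ^ (-(2 * (d : ℝ))) *
          (exp (K / μ) * exp (-(tnorm d u y ^ 2 / (c * μ)))) := by gcongr
    _ = _ := by field_simp

lemma sq_le_two_mul_sq_mul_one_add_sq {x y c : ℝ} (hx : 0 ≤ x) (h : x ≤ c * (y + 1)) :
    x ^ 2 ≤ 2 * c ^ 2 * (1 + y ^ 2) := by
  calc x ^ 2 ≤ (c * (y + 1)) ^ 2 := pow_le_pow_left₀ hx h 2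
    _ ≤ 2 * c ^ 2 * (1 + y ^ 2) := by nlinarith [sq_nonneg (y - 1), sq_nonneg c]

theorem stmt2_general (d : ℕ) (lam κ : ℝ) (hlam : 0 < lam) (hκ : 1 ≤ κ) :
    ∃ C : ℝ, 1 ≤ C ∧ ∃ κ' : ℝ, 1 ≤ κ' ∧
      ∀ u : ℝ, 0 < u → ∀ a b : Vec d,
        κ⁻¹ * (tnorm d u a - 1) ≤ tnorm d u b →
        tnorm d u b ≤ κ * (tnorm d u a + 1) →
        C⁻¹ * gk d (lam / κ') u a ≤ gk d lam u b ∧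
          gk d lam u b ≤ C * gk d (κ' * lam) u a := by
  have hκ' : 1 ≤ 2 * κ ^ 2 := by nlinarith
  have hκ'pos : 0 < 2 * κ ^ 2 := by linarith
  refine ⟨(2 * κ ^ 2) ^ (d : ℝ) * exp (2 * κ ^ 2 / lam),
    one_le_mul_of_one_le_of_one_le (one_le_rpow hκ' d.cast_nonneg) (one_le_exp (by positivity)),
    2 * κ ^ 2, hκ', fun u hu a b hlo hhi => ?_⟩
  have hab : tnorm d u b ^ 2 ≤ 2 * κ ^ 2 * (1 + tnorm d u a ^ 2) :=
    sq_le_two_mul_sq_mul_one_add_sq (tnorm_nonneg d u b) hhi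
  have hba : tnorm d u a ^ 2 ≤ 2 * κ ^ 2 * (1 + tnorm d u b ^ 2) := by
    refine sq_le_two_mul_sq_mul_one_add_sq (tnorm_nonneg d u a) ?_
    have := (inv_mul_le_iff₀ (by linarith : 0 < κ)).1 hlo
    nlinarith
  constructor
  · have := gk_le_mul_gk d 1 (div_pos hlam hκ'pos) hκ'pos hu.le hab
    rw [mul_div_cancel₀ _ hκ'pos.ne', one_div_div] at this
    exact (inv_mul_le_iff₀ (by positivity)).2 this
  · calc gk d lam u b ≤ (2 * κ ^ 2) ^ (d : ℝ) * exp (1 / lam) * gk d (2 * κ ^ 2 * lam) u a :=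
          gk_le_mul_gk d 1 hlam hκ'pos hu.le hba
      _ ≤ _ := by
          gcongr
          exact gk_nonneg d (by positivity) hu.le a

/-- For every `d ≥ 1`, `λ > 0`, `κ ≥ 1` there exist `C ≥ 1` and `κ' ≥ 1` such that whenever
`κ^{-1}(|𝕋_u^{-1}a| − 1) ≤ |𝕋_u^{-1}b| ≤ κ(|𝕋_u^{-1}a| + 1)`, one has
`C^{-1} g_{λ/κ'}(u,a) ≤ g_λ(u,b) ≤ C g_{κ'λ}(u,a)`. -/
theorem stmt2 (d : ℕ) (hd : 1 ≤ d) (lam κ : ℝ) (hlam : 0 < lam) (hκ : 1 ≤ κ) :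
    ∃ C : ℝ, 1 ≤ C ∧ ∃ κ' : ℝ, 1 ≤ κ' ∧
      ∀ u : ℝ, 0 < u → ∀ a b : Vec d,
        κ⁻¹ * (tnorm d u a - 1) ≤ tnorm d u b →
        tnorm d u b ≤ κ * (tnorm d u a + 1) →
        C⁻¹ * gk d (lam / κ') u a ≤ gk d lam u b ∧
          gk d lam u b ≤ C * gk d (κ' * lam) u a :=
  stmt2_general d lam κ hlam hκ
end

section
/- Let d ≥ 1, γ ∈ (0,1) and M > 0. Let f : ℝ^{2d} → ℝ be bounded with ‖f‖_∞ ≤ M, differentiable in its first d variables with ‖∇_{x₁} f‖_∞ ≤ M, and assume: (i) for every x₂ ∈ ℝ^d and all z, z' ∈ ℝ^d with 0 < |z − z'| ≤ 1, |∇_{x₁} f(z, x₂) − ∇_{x₁} f(z', x₂)| ≤ M |z − z'|^γ; (ii) for every x₁ ∈ ℝ^d and all z, z' ∈ ℝ^d with 0 < |z − z'| ≤ 1, |f(x₁, z) − f(x₁, z')| ≤ M |z − z'|^{(1+γ)/3}. Then there exists a constant C, depending only on d and γ, such that for all x = (x₁,x₂), y = (y₁,y₂) ∈ ℝ^{2d}: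 |f(x) − f(y) − ⟨∇_{x₁} f(y), x₁ − y₁⟩| ≤ C M |x − y|_𝐝^{1+γ}. -/
/-!
Split `f x - f y - ⟪∇_{x₁} f y, x₁ - y₁⟫` at the intermediate point `(x₁, y₂)`. The increment
`f (x₁, x₂) - f (x₁, y₂)` is controlled by the Hölder condition in `x₂`, whose exponent
`(1 + γ)/3` is exactly what turns `‖x₂ - y₂‖` into `(‖x₂ - y₂‖ ^ (1/3)) ^ (1 + γ)`. The remainder
`f (x₁, y₂) - f (y₁, y₂) - ⟪∇_{x₁} f y, x₁ - y₁⟫` is a first-order Taylor remainder in `x₁`,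
bounded by the mean value inequality and the Hölder continuity of the gradient. At distances
beyond `1`, where the Hölder conditions say nothing, the sup bounds on `f` and `∇_{x₁} f` suffice.
-/

open scoped RealInnerProductSpace

theorem abs_sub_le_two_mul_rpow_of_localHolder {F : Type*} [SeminormedAddCommGroup F]
    {u : F → ℝ} {α M : ℝ} (hα : 0 ≤ α) (hbd : ∀ z, |u z| ≤ M)
    (hHol : ∀ z z', z ≠ z' → ‖z - z'‖ ≤ 1 → |u z - u z'| ≤ M * ‖z - z'‖ ^ α) (z z' : F) :
    |u z - u z'| ≤ 2 * M * ‖z - z'‖ ^ α := by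
  have hM : 0 ≤ M := (abs_nonneg _).trans (hbd z)
  rcases eq_or_ne z z' with rfl | hne
  · rw [sub_self, abs_zero]; positivity
  rcases le_or_gt ‖z - z'‖ 1 with hle | hgt
  · have := hHol z z' hne hle
    nlinarith [Real.rpow_nonneg (norm_nonneg (z - z')) α]
  · have hone : 1 ≤ ‖z - z'‖ ^ α := Real.one_le_rpow hgt.le hα
    have hdiff : |u z - u z'| ≤ 2 * M := (abs_sub _ _).trans (by linarith [hbd z, hbd z'])
    nlinarith

section Taylor

variable {E : Type*} [NormedAddCommGroup E] [InnerProductSpace ℝ E] [CompleteSpace E]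

theorem abs_sub_sub_inner_gradient_le_of_segment {g : E → ℝ} {x y : E} {K : ℝ}
    (hg : ∀ z ∈ segment ℝ y x, DifferentiableAt ℝ g z)
    (hK : ∀ z ∈ segment ℝ y x, ‖gradient g z - gradient g y‖ ≤ K) :
    |g x - g y - ⟪gradient g y, x - y⟫| ≤ K * ‖x - y‖ := by
  have := (convex_segment y x).norm_image_sub_le_of_norm_hasFDerivWithin_le'
    (f' := fun z => InnerProductSpace.toDual ℝ E (gradient g z))
    (φ := InnerProductSpace.toDual ℝ E (gradient g y))
    (fun z hz => (hg z hz).hasGradientAt.hasFDerivAt.hasFDerivWithinAt)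
    (fun z hz => by rw [← map_sub, LinearIsometryEquiv.norm_map]; exact hK z hz)
    (left_mem_segment ℝ y x) (right_mem_segment ℝ y x)
  simpa only [InnerProductSpace.toDual_apply_apply, Real.norm_eq_abs] using this

theorem abs_sub_sub_inner_gradient_le_of_localHolder {g : E → ℝ} {γ M : ℝ} (hγ : 0 ≤ γ)
    (hM : 0 ≤ M) (hg : ∀ z, DifferentiableAt ℝ g z)
    (hHol : ∀ z z', z ≠ z' → ‖z - z'‖ ≤ 1 →
      ‖gradient g z - gradient g z'‖ ≤ M * ‖z - z'‖ ^ γ)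
    {x y : E} (hxy : ‖x - y‖ ≤ 1) :
    |g x - g y - ⟪gradient g y, x - y⟫| ≤ M * ‖x - y‖ ^ (1 + γ) := by
  have hK : ∀ z ∈ segment ℝ y x, ‖gradient g z - gradient g y‖ ≤ M * ‖x - y‖ ^ γ := by
    intro z hz
    have hzy : ‖z - y‖ ≤ ‖x - y‖ := by
      simpa [dist_eq_norm] using
        (convex_closedBall y ‖x - y‖).segment_subset (Metric.mem_closedBall_self (norm_nonneg _))
          (by simp [dist_eq_norm]) hz
    rcases eq_or_ne z y with rfl | hne
    · rw [sub_self, norm_zero]; positivity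
    calc ‖gradient g z - gradient g y‖ ≤ M * ‖z - y‖ ^ γ := hHol z y hne (hzy.trans hxy)
      _ ≤ M * ‖x - y‖ ^ γ := by gcongr
  calc |g x - g y - ⟪gradient g y, x - y⟫| ≤ M * ‖x - y‖ ^ γ * ‖x - y‖ :=
        abs_sub_sub_inner_gradient_le_of_segment (fun z _ => hg z) hK
    _ = M * ‖x - y‖ ^ (1 + γ) := by
        rw [Real.rpow_add' (norm_nonneg _) (by linarith), Real.rpow_one]; ring

theorem abs_sub_sub_inner_gradient_le_three_mul {g : E → ℝ} {γ M : ℝ} (hγ : 0 ≤ γ)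
    (hbd : ∀ z, |g z| ≤ M) (hg : ∀ z, DifferentiableAt ℝ g z) (hgrad : ∀ z, ‖gradient g z‖ ≤ M)
    (hHol : ∀ z z', z ≠ z' → ‖z - z'‖ ≤ 1 →
      ‖gradient g z - gradient g z'‖ ≤ M * ‖z - z'‖ ^ γ)
    (x y : E) :
    |g x - g y - ⟪gradient g y, x - y⟫| ≤ 3 * M * ‖x - y‖ ^ (1 + γ) := by
  have hM : 0 ≤ M := (abs_nonneg _).trans (hbd x)
  have hpow : 0 ≤ ‖x - y‖ ^ (1 + γ) := by positivity
  rcases le_or_gt ‖x - y‖ 1 with hle | hgt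
  · have := abs_sub_sub_inner_gradient_le_of_localHolder hγ hM hg hHol hle
    nlinarith
  · have hone : 1 ≤ ‖x - y‖ ^ (1 + γ) := Real.one_le_rpow hgt.le (by linarith)
    have hself : ‖x - y‖ ≤ ‖x - y‖ ^ (1 + γ) := Real.self_le_rpow_of_one_le hgt.le (by linarith)
    have hdiff : |g x - g y| ≤ 2 * M := (abs_sub _ _).trans (by linarith [hbd x, hbd y])
    have hinner : |⟪gradient g y, x - y⟫| ≤ M * ‖x - y‖ :=
      (abs_real_inner_le_norm _ _).trans (by gcongr; exact hgrad y)
    have := abs_sub (g x - g y) ⟪gradient g y, x - y⟫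
    nlinarith

end Taylor

theorem stmt3_general (d : ℕ) (γ : ℝ) (hγ0 : 0 < γ) :
    ∃ C : ℝ, 0 < C ∧
      ∀ M : ℝ, 0 < M →
      ∀ f : EuclideanSpace ℝ (Fin d) × EuclideanSpace ℝ (Fin d) → ℝ,
        (∀ x, |f x| ≤ M) →
        (∀ x : EuclideanSpace ℝ (Fin d) × EuclideanSpace ℝ (Fin d),
          DifferentiableAt ℝ (fun z => f (z, x.2)) x.1) →
        (∀ x : EuclideanSpace ℝ (Fin d) × EuclideanSpace ℝ (Fin d),
          ‖gradient (fun z => f (z, x.2)) x.1‖ ≤ M) →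
        (∀ x₂ z z' : EuclideanSpace ℝ (Fin d), z ≠ z' → ‖z - z'‖ ≤ 1 →
          ‖gradient (fun w => f (w, x₂)) z - gradient (fun w => f (w, x₂)) z'‖ ≤
            M * ‖z - z'‖ ^ γ) →
        (∀ x₁ z z' : EuclideanSpace ℝ (Fin d), z ≠ z' → ‖z - z'‖ ≤ 1 →
          |f (x₁, z) - f (x₁, z')| ≤ M * ‖z - z'‖ ^ ((1 + γ) / 3)) →
        ∀ x y : EuclideanSpace ℝ (Fin d) × EuclideanSpace ℝ (Fin d),
          |f x - f y - ⟪gradient (fun z => f (z, y.2)) y.1, x.1 - y.1⟫| ≤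
            C * M * (‖x.1 - y.1‖ + ‖x.2 - y.2‖ ^ ((1 : ℝ) / 3)) ^ (1 + γ) := by
  refine ⟨5, by norm_num, fun M hM f hbd hdiff hgrad hHol₁ hHol₂ x y => ?_⟩
  set r := ‖x.1 - y.1‖
  set s := ‖x.2 - y.2‖ ^ ((1 : ℝ) / 3)
  have hx₂ : |f x - f (x.1, y.2)| ≤ 2 * M * s ^ (1 + γ) := by
    rw [← Real.rpow_mul (norm_nonneg _), one_div_mul_eq_div]
    exact abs_sub_le_two_mul_rpow_of_localHolder (by linarith) (fun z => hbd (x.1, z))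
      (hHol₂ x.1) x.2 y.2
  have hx₁ : |f (x.1, y.2) - f y - ⟪gradient (fun z => f (z, y.2)) y.1, x.1 - y.1⟫| ≤
      3 * M * r ^ (1 + γ) :=
    abs_sub_sub_inner_gradient_le_three_mul hγ0.le (fun z => hbd (z, y.2))
      (fun z => hdiff (z, y.2)) (fun z => hgrad (z, y.2)) (hHol₁ y.2) x.1 y.1
  have hr : r ^ (1 + γ) ≤ (r + s) ^ (1 + γ) := by
    gcongr; exact le_add_of_nonneg_right (by positivity)
  have hs : s ^ (1 + γ) ≤ (r + s) ^ (1 + γ) := by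
    gcongr; exact le_add_of_nonneg_left (by positivity)
  calc |f x - f y - ⟪gradient (fun z => f (z, y.2)) y.1, x.1 - y.1⟫|
      ≤ |f x - f (x.1, y.2)| +
          |f (x.1, y.2) - f y - ⟪gradient (fun z => f (z, y.2)) y.1, x.1 - y.1⟫| := by
        rw [← sub_add_sub_cancel (f x) (f (x.1, y.2)) (f y), add_sub_assoc]
        exact abs_add_le _ _
    _ ≤ 5 * M * (r + s) ^ (1 + γ) := by nlinarith

/-- Taylor expansion estimate in anisotropic Hölder spaces: if `f ∈ C_𝐝^{1+γ}` with all the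
relevant seminorms bounded by `M`, then
`|f(x) − f(y) − ⟨∇_{x₁}f(y), x₁ − y₁⟩| ≤ C M |x − y|_𝐝^{1+γ}` with `C = C(d,γ)`. -/
theorem stmt3 (d : ℕ) (hd : 1 ≤ d) (γ : ℝ) (hγ0 : 0 < γ) (hγ1 : γ < 1) :
    ∃ C : ℝ, 0 < C ∧
      ∀ M : ℝ, 0 < M →
      ∀ f : EuclideanSpace ℝ (Fin d) × EuclideanSpace ℝ (Fin d) → ℝ,
        (∀ x, |f x| ≤ M) →
        (∀ x : EuclideanSpace ℝ (Fin d) × EuclideanSpace ℝ (Fin d),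
          DifferentiableAt ℝ (fun z => f (z, x.2)) x.1) →
        (∀ x : EuclideanSpace ℝ (Fin d) × EuclideanSpace ℝ (Fin d),
          ‖gradient (fun z => f (z, x.2)) x.1‖ ≤ M) →
        (∀ x₂ z z' : EuclideanSpace ℝ (Fin d), z ≠ z' → ‖z - z'‖ ≤ 1 →
          ‖gradient (fun w => f (w, x₂)) z - gradient (fun w => f (w, x₂)) z'‖ ≤
            M * ‖z - z'‖ ^ γ) →
        (∀ x₁ z z' : EuclideanSpace ℝ (Fin d), z ≠ z' → ‖z - z'‖ ≤ 1 →
          |f (x₁, z) - f (x₁, z')| ≤ M * ‖z - z'‖ ^ ((1 + γ) / 3)) →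
        ∀ x y : EuclideanSpace ℝ (Fin d) × EuclideanSpace ℝ (Fin d),
          |f x - f y - ⟪gradient (fun z => f (z, y.2)) y.1, x.1 - y.1⟫| ≤
            C * M * (‖x.1 - y.1‖ + ‖x.2 - y.2‖ ^ ((1 : ℝ) / 3)) ^ (1 + γ) :=
  stmt3_general d γ hγ0
end

section
/- Fix d ≥ 1 and 0 ≤ s ≤ t ≤ T. Let F = (F₁,F₂) : [0,T] × ℝ^{2d} → ℝ^{2d} be measurable with F₂ differentiable in its first d space variables and ∇_{x₁}F₂ bounded, and let θ be a two-parameter flow of F in the sense that for all τ and ξ, r ↦ θ_{r,τ}(ξ) is absolutely continuous with θ_{τ,τ}(ξ)=ξ and d/dr θ_{r,τ}(ξ) = F(r, θ_{r,τ}(ξ)) a.e. For a freezing point (t,y), define A(r,z) := [[0,0],[∇_{x₁}F₂(r,z), 0]] ∈ ℝ^{2d×2d}, the resolvent R_{t,s} := [[I_d, 0],[∫_s^t ∇_{x₁}F₂(r, θ_{r,t}(y)) dr, I_d]], and the linearized mean ϑ_{t,s}^{(t,y)}(x) := R_{t,s} x + ∫_s^t R_{t,r} ( F(r, θ_{r,t}(y))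 − A(r, θ_{r,t}(y)) θ_{r,t}(y) ) dr. Then for all x ∈ ℝ^{2d}: ϑ_{t,s}^{(t,y)}(x) − y = R_{t,s} ( x − θ_{s,t}(y) ). -/
/-!
Write `R_r := R_{t,r}` and `γ r := θ_{r,t}(y)`. Both are absolutely continuous in `r`, with
`∂_r R_r = [[0, 0], [-∇_{x₁}F₂(r, γ r), 0]]` and `γ' = F(r, γ r)` a.e., and `R_r (0, v) = (0, v)`.
So the product rule gives `∂_r (R_r γ r) = R_r (F(r, γ r) - A(r, γ r) γ r)` a.e.: the integrand of
`ϑ` is the derivative of `r ↦ R_r γ r`, whose integral over `[s, t]` is `y - R_{t,s} θ_{s,t}(y)`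
since `R_t = I` and `γ t = y`.
-/

open MeasureTheory Matrix
open scoped BigOperators

/-- The lower-left block `∫_s^t ∇_{x₁}F₂(r, θ_{r,t}(y)) dr` of the resolvent `R_{t,s}`. -/
noncomputable def Jmat (d : ℕ) (DF2 : ℝ → Vec d → Matrix (Fin d) (Fin d) ℝ)
    (θ : ℝ → ℝ → Vec d → Vec d) (s t : ℝ) (y : Vec d) : Matrix (Fin d) (Fin d) ℝ :=
  Matrix.of fun i j => ∫ r in s..t, DF2 r (θ r t y) i j

/-- Action of the resolvent `[[I,0],[J,I]]` on `ℝ^{2d}`. -/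
def Rapp (d : ℕ) (J : Matrix (Fin d) (Fin d) ℝ) (x : Vec d) : Vec d :=
  (x.1, J *ᵥ x.1 + x.2)

/-- The linearized mean
`ϑ_{t,s}^{(t,y)}(x) = R_{t,s}x + ∫_s^t R_{t,r}(F(r,θ_{r,t}(y)) − A(r,θ_{r,t}(y)) θ_{r,t}(y)) dr`,
where `A(r,z) = [[0,0],[∇_{x₁}F₂(r,z),0]]`. -/
noncomputable def linMean (d : ℕ) (F : ℝ → Vec d → Vec d)
    (DF2 : ℝ → Vec d → Matrix (Fin d) (Fin d) ℝ) (θ : ℝ → ℝ → Vec d → Vec d)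
    (s t : ℝ) (y x : Vec d) : Vec d :=
  Rapp d (Jmat d DF2 θ s t y) x +
    ∫ r in s..t,
      Rapp d (Jmat d DF2 θ r t y)
        (F r (θ r t y) - (0, DF2 r (θ r t y) *ᵥ (θ r t y).1))

open Set intervalIntegral

theorem ContinuousLinearMap.intervalIntegrable_comp {E F : Type*} [NormedAddCommGroup E]
    [NormedSpace ℝ E] [NormedAddCommGroup F] [NormedSpace ℝ F] (L : E →L[ℝ] F) {f : ℝ → E}
    {a b : ℝ} (hf : IntervalIntegrable f volume a b) :
    IntervalIntegrable (fun r => L (f r)) volume a b :=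
  ⟨L.integrable_comp hf.1, L.integrable_comp hf.2⟩

theorem intervalIntegrable_pi_iff {ι E : Type*} [Fintype ι] [NormedAddCommGroup E]
    {f : ℝ → ι → E} {a b : ℝ} :
    IntervalIntegrable f volume a b ↔ ∀ i, IntervalIntegrable (fun r => f r i) volume a b := by
  simp only [intervalIntegrable_iff, IntegrableOn, integrable_pi_iff]

/-- The integrability of `u'` is part of the notion: otherwise every integral of `u'` could be
the junk value `0` and a constant `u` would qualify. -/
def IsPrimitiveOn {E : Type*} [NormedAddCommGroup E] [NormedSpace ℝ E]
    (u u' : ℝ → E) (a b : ℝ) : Prop :=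
  IntervalIntegrable u' volume a b ∧
    ∀ x ∈ uIcc a b, ∀ y ∈ uIcc a b, ∫ r in x..y, u' r = u y - u x

namespace IsPrimitiveOn

section General

variable {E F : Type*} [NormedAddCommGroup E] [NormedSpace ℝ E]
  [NormedAddCommGroup F] [NormedSpace ℝ F] {u u' : ℝ → E} {a b : ℝ}

theorem integral_eq_sub (h : IsPrimitiveOn u u' a b) : ∫ r in a..b, u' r = u b - u a :=
  h.2 a left_mem_uIcc b right_mem_uIcc

theorem of_eq_add_integral (hu' : IntervalIntegrable u' volume a b) {c : ℝ} (hc : c ∈ uIcc a b)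
    (k : E) (hu : ∀ r ∈ uIcc a b, u r = k + ∫ v in c..r, u' v) : IsPrimitiveOn u u' a b := by
  refine ⟨hu', fun x hx y hy => ?_⟩
  rw [hu x hx, hu y hy, add_sub_add_left_eq_sub, integral_interval_sub_left
    (hu'.mono_set (uIcc_subset_uIcc hc hy)) (hu'.mono_set (uIcc_subset_uIcc hc hx))]

theorem mono (h : IsPrimitiveOn u u' a b) {c d : ℝ} (hcd : uIcc c d ⊆ uIcc a b) :
    IsPrimitiveOn u u' c d :=
  ⟨h.1.mono_set hcd, fun x hx y hy => h.2 x (hcd hx) y (hcd hy)⟩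

theorem continuousOn (h : IsPrimitiveOn u u' a b) : ContinuousOn u (uIcc a b) := by
  refine (continuousOn_const (c := u a)).add
    (continuousOn_primitive_interval' h.1 left_mem_uIcc) |>.congr fun x hx => ?_
  simp only [Pi.add_apply, h.2 a left_mem_uIcc x hx, add_sub_cancel]

theorem add {v v' : ℝ → E} (hu : IsPrimitiveOn u u' a b) (hv : IsPrimitiveOn v v' a b) :
    IsPrimitiveOn (fun r => u r + v r) (fun r => u' r + v' r) a b := by
  refine ⟨hu.1.add hv.1, fun x hx y hy => ?_⟩
  rw [integral_add (hu.1.mono_set (uIcc_subset_uIcc hx hy))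
    (hv.1.mono_set (uIcc_subset_uIcc hx hy)), hu.2 x hx y hy, hv.2 x hx y hy]
  exact sub_add_sub_comm _ _ _ _

theorem sum {ι : Type*} (s : Finset ι) {u u' : ι → ℝ → E}
    (h : ∀ i ∈ s, IsPrimitiveOn (u i) (u' i) a b) :
    IsPrimitiveOn (fun r => ∑ i ∈ s, u i r) (fun r => ∑ i ∈ s, u' i r) a b := by
  classical
  induction s using Finset.induction_on with
  | empty => exact ⟨by simp, fun x _ y _ => by simp⟩
  | insert i s hi ih =>
    simp only [Finset.sum_insert hi]
    exact (h i (Finset.mem_insert_self i s)).add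
      (ih fun j hj => h j (Finset.mem_insert_of_mem hj))

variable [CompleteSpace E]

theorem continuousLinearMap_comp [CompleteSpace F] (h : IsPrimitiveOn u u' a b) (L : E →L[ℝ] F) :
    IsPrimitiveOn (fun r => L (u r)) (fun r => L (u' r)) a b := by
  refine ⟨L.intervalIntegrable_comp h.1, fun x hx y hy => ?_⟩
  rw [L.intervalIntegral_comp_comm (h.1.mono_set (uIcc_subset_uIcc hx hy)), h.2 x hx y hy,
    map_sub]

theorem prodMk [CompleteSpace F] {v v' : ℝ → F} (hu : IsPrimitiveOn u u' a b)
    (hv : IsPrimitiveOn v v' a b) :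
    IsPrimitiveOn (fun r => (u r, v r)) (fun r => (u' r, v' r)) a b := by
  have hint : IntervalIntegrable (fun r => (u' r, v' r)) volume a b :=
    ⟨hu.1.1.prodMk hv.1.1, hu.1.2.prodMk hv.1.2⟩
  refine ⟨hint, fun x hx y hy => Prod.ext ?_ ?_⟩
  · rw [Prod.fst_sub, ← hu.2 x hx y hy]
    exact ((ContinuousLinearMap.fst ℝ E F).intervalIntegral_comp_comm
      (hint.mono_set (uIcc_subset_uIcc hx hy))).symm
  · rw [Prod.snd_sub, ← hv.2 x hx y hy]
    exact ((ContinuousLinearMap.snd ℝ E F).intervalIntegral_comp_comm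
      (hint.mono_set (uIcc_subset_uIcc hx hy))).symm

theorem pi_iff {ι : Type*} [Fintype ι] {u u' : ℝ → ι → E} :
    IsPrimitiveOn u u' a b ↔ ∀ i, IsPrimitiveOn (fun r => u r i) (fun r => u' r i) a b := by
  refine ⟨fun h i => h.continuousLinearMap_comp (ContinuousLinearMap.proj i), fun h => ?_⟩
  refine ⟨intervalIntegrable_pi_iff.2 fun i => (h i).1, fun x hx y hy => funext fun i => ?_⟩
  rw [Pi.sub_apply, ← (h i).2 x hx y hy]
  exact ((ContinuousLinearMap.proj (R := ℝ) (φ := fun _ : ι => E) i).intervalIntegral_comp_comm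
    ((intervalIntegrable_pi_iff.2 fun i => (h i).1).mono_set (uIcc_subset_uIcc hx hy))).symm

end General

section Real

variable {u u' v v' : ℝ → ℝ} {a b : ℝ}

theorem exists_absolutelyContinuousOnInterval (h : IsPrimitiveOn u u' a b) :
    ∃ U : ℝ → ℝ, AbsolutelyContinuousOnInterval U a b ∧ EqOn U u (uIcc a b) ∧
      ∀ᵐ x, x ∈ uIcc a b → deriv U x = u' x := by
  refine ⟨fun x => u a + ∫ r in a..x, u' r,
    contDiffOn_const.absolutelyContinuousOnInterval.fun_add
      (h.1.absolutelyContinuousOnInterval_intervalIntegral left_mem_uIcc),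
    fun x hx => by simp only [h.2 a left_mem_uIcc x hx, add_sub_cancel], ?_⟩
  filter_upwards [h.1.ae_hasDerivAt_integral] with x hx hxab
  exact ((hx hxab a left_mem_uIcc).const_add _).deriv

theorem integral_deriv_mul_add_mul_deriv (hu : IsPrimitiveOn u u' a b)
    (hv : IsPrimitiveOn v v' a b) :
    ∫ x in a..b, u' x * v x + u x * v' x = u b * v b - u a * v a := by
  obtain ⟨U, hUac, hUu, hU'⟩ := hu.exists_absolutelyContinuousOnInterval
  obtain ⟨V, hVac, hVv, hV'⟩ := hv.exists_absolutelyContinuousOnInterval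
  calc ∫ x in a..b, u' x * v x + u x * v' x
      = ∫ x in a..b, deriv U x * V x + U x * deriv V x := by
        refine integral_congr_ae ?_
        filter_upwards [hU', hV'] with x hxU hxV hx
        have hx' : x ∈ uIcc a b := uIoc_subset_uIcc hx
        rw [hxU hx', hxV hx', hUu hx', hVv hx']
    _ = U b * V b - U a * V a := hUac.integral_deriv_mul_eq_sub hVac
    _ = u b * v b - u a * v a := by
        rw [hUu left_mem_uIcc, hUu right_mem_uIcc, hVv left_mem_uIcc, hVv right_mem_uIcc]

theorem mul (hu : IsPrimitiveOn u u' a b) (hv : IsPrimitiveOn v v' a b) :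
    IsPrimitiveOn (fun r => u r * v r) (fun r => u' r * v r + u r * v' r) a b :=
  ⟨(hu.1.mul_continuousOn hv.continuousOn).add (hv.1.continuousOn_mul hu.continuousOn),
    fun _ hx _ hy => ((hu.mono (uIcc_subset_uIcc hx hy)).integral_deriv_mul_add_mul_deriv
      (hv.mono (uIcc_subset_uIcc hx hy)))⟩

theorem mulVec {m n : Type*} [Fintype m] [Fintype n] {A A' : ℝ → Matrix m n ℝ}
    {x x' : ℝ → n → ℝ} (hA : ∀ i j, IsPrimitiveOn (fun r => A r i j) (fun r => A' r i j) a b)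
    (hx : IsPrimitiveOn x x' a b) :
    IsPrimitiveOn (fun r => A r *ᵥ x r) (fun r => A' r *ᵥ x r + A r *ᵥ x' r) a b := by
  refine pi_iff.2 fun i => ?_
  simpa only [Pi.add_apply, Matrix.mulVec, dotProduct, ← Finset.sum_add_distrib] using
    sum Finset.univ fun j _ => (hA i j).mul (pi_iff.1 hx j)

end Real

end IsPrimitiveOn

section Resolvent

variable {d : ℕ}

theorem Rapp_zero (x : Vec d) : Rapp d 0 x = x := by
  simp [Rapp]

theorem Rapp_sub (J : Matrix (Fin d) (Fin d) ℝ) (x z : Vec d) :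
    Rapp d J (x - z) = Rapp d J x - Rapp d J z := by
  ext : 1
  · simp [Rapp]
  · simp only [Rapp, Prod.snd_sub, Prod.fst_sub, Matrix.mulVec_sub]
    abel

theorem Rapp_sub_inr (J : Matrix (Fin d) (Fin d) ℝ) (x : Vec d) (v : Fin d → ℝ) :
    Rapp d J (x - (0, v)) = Rapp d J x + (0, -v) := by
  ext <;> simp [Rapp, sub_eq_add_neg, add_assoc]

theorem IsPrimitiveOn.rapp {J J' : ℝ → Matrix (Fin d) (Fin d) ℝ} {γ G : ℝ → Vec d} {a b : ℝ}
    (hJ : ∀ i j, IsPrimitiveOn (fun r => J r i j) (fun r => J' r i j) a b)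
    (hγ : IsPrimitiveOn γ G a b) :
    IsPrimitiveOn (fun r => Rapp d (J r) (γ r))
      (fun r => Rapp d (J r) (G r) + (0, J' r *ᵥ (γ r).1)) a b := by
  have hγ₁ := hγ.continuousLinearMap_comp (ContinuousLinearMap.fst ℝ _ _)
  have hγ₂ := hγ.continuousLinearMap_comp (ContinuousLinearMap.snd ℝ _ _)
  have hderiv : (fun r => Rapp d (J r) (G r) + (0, J' r *ᵥ (γ r).1)) =
      fun r => ((G r).1, J' r *ᵥ (γ r).1 + J r *ᵥ (G r).1 + (G r).2) := by
    funext r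
    ext : 1
    · simp [Rapp]
    · simp only [Rapp, Prod.snd_add]
      abel
  rw [hderiv]
  exact hγ₁.prodMk ((IsPrimitiveOn.mulVec hJ hγ₁).add hγ₂)

end Resolvent

theorem stmt12_general (d : ℕ) (T s t : ℝ)
    (hs : 0 ≤ s) (hst : s ≤ t) (htT : t ≤ T)
    (F : ℝ → Vec d → Vec d) (DF2 : ℝ → Vec d → Matrix (Fin d) (Fin d) ℝ)
    (θ : ℝ → ℝ → Vec d → Vec d) (y : Vec d)
    -- the curve r ↦ θ_{r,t}(y) is absolutely continuous with a.e. derivative F(r,θ_{r,t}(y)),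
    -- i.e. it satisfies the integral equation, with integrable right-hand side
    (hflow : ∀ r ∈ Set.Icc (0 : ℝ) T, θ r t y = y + ∫ u in t..r, F u (θ u t y))
    (hFint : IntervalIntegrable (fun u => F u (θ u t y)) volume s t)
    (hDint : ∀ i j, IntervalIntegrable (fun r => DF2 r (θ r t y) i j) volume s t) :
    ∀ x : Vec d,
      linMean d F DF2 θ s t y x - y = Rapp d (Jmat d DF2 θ s t y) (x - θ s t y) := by
  intro x
  have hmem : ∀ r ∈ uIcc s t, r ∈ Icc 0 T := by
    rw [uIcc_of_le hst]
    exact fun r hr => ⟨hs.trans hr.1, hr.2.trans htT⟩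
  have hθ : IsPrimitiveOn (fun r => θ r t y) (fun r => F r (θ r t y)) s t :=
    .of_eq_add_integral hFint right_mem_uIcc y fun r hr => hflow r (hmem r hr)
  have hJ : ∀ i j, IsPrimitiveOn (fun r => Jmat d DF2 θ r t y i j)
      (fun r => (-DF2 r (θ r t y)) i j) s t := fun i j =>
    .of_eq_add_integral (hDint i j).neg right_mem_uIcc 0 fun r _ => by
      simp [Jmat, integral_symm r t]
  have hθt : θ t t y = y := by simpa using hflow t (hmem t right_mem_uIcc)
  have hJt : Jmat d DF2 θ t t y = 0 := by ext; simp [Jmat]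
  have hintegral := (IsPrimitiveOn.rapp hJ hθ).integral_eq_sub
  simp only [hθt, hJt, Rapp_zero, neg_mulVec, ← Rapp_sub_inr] at hintegral
  rw [linMean, hintegral, Rapp_sub]
  abel

/-- The linearized mean transports the backward flow:
`ϑ_{t,s}^{(t,y)}(x) − y = R_{t,s}(x − θ_{s,t}(y))`. -/
theorem stmt12 (d : ℕ) (hd : 1 ≤ d) (T s t M : ℝ)
    (hs : 0 ≤ s) (hst : s ≤ t) (htT : t ≤ T) (hM : 0 < M)
    (F : ℝ → Vec d → Vec d) (DF2 : ℝ → Vec d → Matrix (Fin d) (Fin d) ℝ)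
    (θ : ℝ → ℝ → Vec d → Vec d) (y : Vec d)
    -- F is measurable
    (hFmeas : Measurable fun p : ℝ × Vec d => F p.1 p.2)
    -- DF2 is the Jacobian of F₂ in the first d space variables
    (hDF2jac : ∀ r x, HasFDerivAt (fun z : Fin d → ℝ => (F r (z, x.2)).2)
        (LinearMap.toContinuousLinearMap (Matrix.mulVecLin (DF2 r x))) x.1)
    -- ∇_{x₁}F₂ is bounded
    (hDF2bdd : ∀ r x i j, |DF2 r x i j| ≤ M)
    -- the curve r ↦ θ_{r,t}(y) is absolutely continuous with a.e. derivative F(r,θ_{r,t}(y)),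
    -- i.e. it satisfies the integral equation, with integrable right-hand side
    (hflow : ∀ r ∈ Set.Icc (0 : ℝ) T, θ r t y = y + ∫ u in t..r, F u (θ u t y))
    (hFint : IntervalIntegrable (fun u => F u (θ u t y)) volume s t)
    (hDint : ∀ i j, IntervalIntegrable (fun r => DF2 r (θ r t y) i j) volume s t) :
    ∀ x : Vec d,
      linMean d F DF2 θ s t y x - y = Rapp d (Jmat d DF2 θ s t y) (x - θ s t y) :=
  stmt12_general d T s t hs hst htT F DF2 θ y hflow hFint hDint
end
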